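/- arXiv:1701.07900 — 2 statements merged into one kernel-verified Lean document; each statement's English description precedes it below -/
import Mathlib

section
/- Suppose M, X, ψ : I → ℝ are differentiable, with M' = −dM, X' = (a + b cos 2ψ)X + c, and define f = 1/(1 + ¼ M b sin 2ψ) (assumed nonvanishing) and X̄ = fX. Then X̄ satisfies X̄' = [ a + M( (ab + bd − b')/4 · sin 2ψ − (be/2) cos 2ψ + (b²/8) sin 4ψ ) ] f X̄ + c f, provided ψ' = 2/M + e. -/
/-- Averaging transformation for the Bianchi VII₀ system: the evolution
equation of `X̄ = fX` with `f = 1/(1 + ¼ M b sin 2ψ)`. -/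
theorem averaged_X_evolution
    (M X ψ a b b' c d e : ℝ → ℝ) (τ : ℝ)
    (hM0 : M τ ≠ 0)
    (hf : ∀ s, 1 + (1/4) * M s * b s * Real.sin (2 * ψ s) ≠ 0)
    (hM : HasDerivAt M (-(d τ) * M τ) τ)
    (hX : HasDerivAt X ((a τ + b τ * Real.cos (2 * ψ τ)) * X τ + c τ) τ)
    (hψ : HasDerivAt ψ (2 / M τ + e τ) τ)
    (hb : HasDerivAt b (b' τ) τ) :
    HasDerivAt (fun s => (1 / (1 + (1/4) * M s * b s * Real.sin (2 * ψ s))) * X s)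
      ((a τ + M τ * ((a τ * b τ + b τ * d τ - b' τ) / 4 * Real.sin (2 * ψ τ)
            - (b τ * e τ / 2) * Real.cos (2 * ψ τ)
            + (b τ ^ 2 / 8) * Real.sin (4 * ψ τ)))
          * (1 / (1 + (1/4) * M τ * b τ * Real.sin (2 * ψ τ)))
          * ((1 / (1 + (1/4) * M τ * b τ * Real.sin (2 * ψ τ))) * X τ)
        + c τ * (1 / (1 + (1/4) * M τ * b τ * Real.sin (2 * ψ τ)))) τ := by
  have hψ2 : HasDerivAt (fun s => 2 * ψ s) (2 * (2 / M τ + e τ)) τ := hψ.const_mul 2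
  have hsin : HasDerivAt (fun s => Real.sin (2 * ψ s))
      (Real.cos (2 * ψ τ) * (2 * (2 / M τ + e τ))) τ := hψ2.sin
  have hg : HasDerivAt (fun s => 1 + (1/4) * M s * b s * Real.sin (2 * ψ s))
      ((((1/4) * (-(d τ) * M τ)) * b τ + ((1/4) * M τ) * b' τ) * Real.sin (2 * ψ τ)
        + ((1/4) * M τ * b τ) * (Real.cos (2 * ψ τ) * (2 * (2 / M τ + e τ)))) τ := by
    exact (((hM.const_mul (1/4)).mul hb).mul hsin).const_add 1
  have hinv : HasDerivAt (fun s => (1 + (1/4) * M s * b s * Real.sin (2 * ψ s))⁻¹)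
      (-((((1/4) * (-(d τ) * M τ)) * b τ + ((1/4) * M τ) * b' τ) * Real.sin (2 * ψ τ)
        + ((1/4) * M τ * b τ) * (Real.cos (2 * ψ τ) * (2 * (2 / M τ + e τ))))
        / (1 + (1/4) * M τ * b τ * Real.sin (2 * ψ τ)) ^ 2) τ := hg.inv (hf τ)
  have h := hinv.mul hX
  simp only [one_div]
  have hs4 : Real.sin (4 * ψ τ) = 2 * Real.sin (2 * ψ τ) * Real.cos (2 * ψ τ) := by
    have : (4 : ℝ) * ψ τ = 2 * (2 * ψ τ) := by ring
    rw [this, Real.sin_two_mul]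
  convert h using 1
  · rfl
  · rfl
  · ext s; norm_num
  · have h4 : (4 : ℝ) + M τ * b τ * Real.sin (2 * ψ τ) ≠ 0 := by
      have := hf τ; intro hc; apply this; linarith
    rw [hs4]; field_simp; ring
end

section
/- Let M, X : [τ₀,∞) → ℝ>0 satisfy M(τ) = m·e^{−τ/2}(1+o(1)) and X(τ) = x·e^{−τ/2}(1+o(1)) with m, x > 0, and let Σ₊(τ) = O(e^{−τ}), ψ arbitrary. Define 𝒲² = ℰ₊² + ℰ₋² + ℋ₊² + ℋ₋² with ℰ₊ = Σ₊(1+Σ₊) + ½X²(1−3cos 2ψ), ℰ₋ = (2X/M)(sin ψ + ½M(1−2Σ₊)cos ψ), ℋ₊ = −(3/2)X² sin 2ψ, ℋ₋ = (2X/M)(−cos ψ − (3/2)MΣ₊ sin ψ). Then 𝒲 = (2X/M)(1 + O(M)), and in particular 𝒲(τ) → 2x/m as τ → ∞. -/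
open Filter

lemma abs_sqrt_sub_le {S A : ℝ} (hA : 0 < A) (hS : 0 ≤ S) :
    |Real.sqrt S - A| ≤ |S - A ^ 2| / A := by
  rw [le_div_iff₀ hA]
  have h1 : Real.sqrt S * Real.sqrt S = S := Real.mul_self_sqrt hS
  have h2 : |S - A ^ 2| = |Real.sqrt S - A| * (Real.sqrt S + A) := by
    rw [← abs_of_nonneg (a := Real.sqrt S + A) (by positivity), ← abs_mul]
    congr 1; nlinarith [h1]
  rw [h2]
  have h3 : A ≤ Real.sqrt S + A := by nlinarith [Real.sqrt_nonneg S]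
  exact mul_le_mul_of_nonneg_left h3 (abs_nonneg _)

set_option maxHeartbeats 1000000 in
lemma weyl_pointwise (x C0 Mt Xt Sv s c c2 s2 E en : ℝ)
    (hx : 0 < x) (hC0nn : 0 ≤ C0)
    (hMt : 0 < Mt) (hXt : 0 < Xt) (hM1 : Mt ≤ 1)
    (hSig1 : |Sv| ≤ 1) (hSen : |Sv| ≤ C0 * en)
    (hsc : s^2 + c^2 = 1) (hs1 : |s| ≤ 1) (hc1 : |c| ≤ 1)
    (hc21 : |c2| ≤ 1) (hs21 : |s2| ≤ 1)
    (hEpos : 0 < E) (henpos : 0 < en) (hEE : en * (E * E) = 1) (hen1 : en ≤ 1)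
    (hxl : x/2 ≤ Xt * E) (hxu : Xt * E ≤ 3*x/2) :
    |Real.sqrt ((Sv * (1 + Sv) + (1/2) * Xt ^ 2 * (1 - 3 * c2)) ^ 2
        + ((2 * Xt / Mt) * (s + (1/2) * Mt * (1 - 2 * Sv) * c)) ^ 2
        + (-(3/2) * Xt ^ 2 * s2) ^ 2
        + ((2 * Xt / Mt) * (-c - (3/2) * Mt * Sv * s)) ^ 2)
      - 2 * Xt / Mt| ≤ (4*(2*C0+5*x^2)^2/x^2 + 22) * Xt := by
  set D : ℝ := 2*C0 + 5*x^2 with hD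
  have hDnn : 0 ≤ D := by positivity
  clear_value D
  have hsq : Xt*E*(Xt*E)*en = Xt^2 := by linear_combination Xt^2 * hEE
  have hXup : Xt^2 ≤ (9/4) * x^2 * en := by
    have h1 : Xt*E*(Xt*E) ≤ (3*x/2)*(3*x/2) :=
      mul_self_le_mul_self (by positivity) hxu
    have h2 := mul_le_mul_of_nonneg_right h1 henpos.le
    linarith
  have hXlow : (x^2/4) * en ≤ Xt^2 := by
    have h1 : (x/2)*(x/2) ≤ Xt*E*(Xt*E) :=
      mul_self_le_mul_self (by positivity) hxl
    have h2 := mul_le_mul_of_nonneg_right h1 henpos.le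
    linarith
  set Ep : ℝ := Sv * (1 + Sv) + (1/2) * Xt ^ 2 * (1 - 3 * c2) with hEp
  set Hp : ℝ := -(3/2) * Xt ^ 2 * s2 with hHp
  set A : ℝ := 2 * Xt / Mt with hAd
  have hA0 : 0 < A := by rw [hAd]; positivity
  have hAMt : A * Mt = 2 * Xt := by rw [hAd]; field_simp
  set S : ℝ := Ep ^ 2
      + (A * (s + (1/2) * Mt * (1 - 2 * Sv) * c)) ^ 2
      + Hp ^ 2
      + (A * (-c - (3/2) * Mt * Sv * s)) ^ 2 with hSd
  have hS0 : 0 ≤ S := by rw [hSd]; positivity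
  clear_value Ep Hp A S
  have hxen : 0 ≤ x^2 * en := by positivity
  have hC0en : 0 ≤ C0 * en := by positivity
  -- bounds on |Ep|, |Hp|
  have hEpb : |Ep| ≤ D * en := by
    have h1 : |Sv * (1 + Sv)| ≤ C0 * en * 2 := by
      rw [abs_mul]
      have h2 : |1 + Sv| ≤ 2 := by
        have := abs_le.mp hSig1
        rw [abs_le]; constructor <;> linarith [this.1, this.2]
      have := mul_le_mul hSen h2 (abs_nonneg _) hC0en
      linarith
    have h2 : |(1/2) * Xt ^ 2 * (1 - 3 * c2)| ≤ 2 * Xt^2 := by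
      rw [abs_mul, abs_of_nonneg (by positivity : (0:ℝ) ≤ (1/2) * Xt^2)]
      have h3 : |1 - 3*c2| ≤ 4 := by
        have := abs_le.mp hc21
        rw [abs_le]; constructor <;> linarith [this.1, this.2]
      have := mul_le_mul_of_nonneg_left h3 (by positivity : (0:ℝ) ≤ (1/2) * Xt^2)
      linarith
    rw [hEp]
    calc |Sv * (1 + Sv) + (1/2) * Xt ^ 2 * (1 - 3 * c2)|
        ≤ |Sv * (1 + Sv)| + |(1/2) * Xt ^ 2 * (1 - 3 * c2)| := abs_add_le _ _
      _ ≤ C0 * en * 2 + 2 * Xt^2 := by linarith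
      _ ≤ D * en := by rw [hD]; linarith [hXup]
  have hHpb : |Hp| ≤ D * en := by
    have h1 : |Hp| = (3/2) * Xt^2 * |s2| := by
      rw [hHp, abs_mul, abs_mul,
        abs_of_nonpos (by norm_num : -(3/2 : ℝ) ≤ 0), abs_of_nonneg (sq_nonneg Xt)]
      ring
    have h4 := mul_le_mul_of_nonneg_left hs21 (by positivity : (0:ℝ) ≤ (3/2) * Xt^2)
    rw [h1, hD]
    linarith [hXup]
  have hEH : Ep^2 + Hp^2 ≤ 2 * D^2 * en^2 := by
    have h1 := mul_self_le_mul_self (abs_nonneg Ep) hEpb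
    have h2 := mul_self_le_mul_self (abs_nonneg Hp) hHpb
    rw [abs_mul_abs_self] at h1 h2
    linarith [h1, h2]
  -- algebraic identity
  set r : ℝ := (1 - 2*Sv)*s*c + 3*Sv*s*c + (Mt/4)*(1-2*Sv)^2*c^2
      + (9/4)*Mt*Sv^2*s^2 with hrd
  have hident : S - A^2 = Ep^2 + Hp^2 + A^2 * (Mt * r) := by
    rw [hSd, hrd]; linear_combination A^2 * hsc
  have hrb : |r| ≤ 11 := by
    obtain ⟨hSl, hSu⟩ := abs_le.mp hSig1
    obtain ⟨hsl, hsu⟩ := abs_le.mp hs1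
    obtain ⟨hcl, hcu⟩ := abs_le.mp hc1
    have hscle : s*c ≤ 1/2 := by nlinarith only [sq_nonneg (s - c), hsc]
    have hscge : -(1/2) ≤ s*c := by nlinarith only [sq_nonneg (s + c), hsc]
    have hc2' : c^2 ≤ 1 := by linarith only [sq_nonneg s, hsc]
    have hs2' : s^2 ≤ 1 := by linarith only [sq_nonneg c, hsc]
    have hq : (1-2*Sv)^2 ≤ 9 := by nlinarith only [hSl, hSu]
    have hSvsq : Sv^2 ≤ 1 := by nlinarith only [hSl, hSu]
    have h9 : (1-2*Sv)^2 * c^2 ≤ 9 := by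
      have := mul_le_mul hq hc2' (sq_nonneg c) (by norm_num : (0:ℝ) ≤ 9)
      linarith only [this]
    have hSs : Sv^2 * s^2 ≤ 1 := by
      have := mul_le_mul hSvsq hs2' (sq_nonneg s) (by norm_num : (0:ℝ) ≤ 1)
      linarith only [this]
    have hy2 : 0 ≤ (1-2*Sv)^2*c^2 := by positivity
    have hy3 : 0 ≤ Sv^2*s^2 := by positivity
    have hprod2 : (Mt/4)*((1-2*Sv)^2*c^2) ≤ 9/4 := by
      have := mul_le_mul (show Mt/4 ≤ 1/4 by linarith only [hM1]) h9 hy2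
        (by norm_num : (0:ℝ) ≤ 1/4)
      linarith only [this]
    have hprod3 : (9/4)*(Mt*(Sv^2*s^2)) ≤ 9/4 := by
      have := mul_le_mul hM1 hSs hy3 (by norm_num : (0:ℝ) ≤ 1)
      linarith only [this]
    have hsc_abs : |s*c| ≤ 1/2 := abs_le.mpr ⟨hscge, hscle⟩
    have h1pS : |1+Sv| ≤ 2 := abs_le.mpr ⟨by linarith, by linarith⟩
    have ha : |(1+Sv)*(s*c)| ≤ 1 := by
      rw [abs_mul]
      exact (mul_le_mul h1pS hsc_abs (abs_nonneg _) (by norm_num)).trans (by norm_num)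
    have hsplit : r = (1+Sv)*(s*c)
        + ((Mt/4)*((1-2*Sv)^2*c^2) + (9/4)*(Mt*(Sv^2*s^2))) := by rw [hrd]; ring
    rw [hsplit]
    refine (abs_add_le _ _).trans ?_
    have hb : |(Mt/4)*((1-2*Sv)^2*c^2) + (9/4)*(Mt*(Sv^2*s^2))| ≤ 9/4 + 9/4 := by
      rw [abs_of_nonneg (by positivity)]
      linarith only [hprod2, hprod3]
    linarith only [ha, hb]
  clear_value r
  -- assemble
  have habs : |S - A^2| ≤ 2*D^2*en^2 + 22 * (Xt * A) := by
    rw [hident]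
    have h1 : |A^2 * (Mt * r)| ≤ A^2 * Mt * 11 := by
      rw [abs_mul, abs_mul, abs_of_nonneg (sq_nonneg A), abs_of_nonneg hMt.le]
      have := mul_le_mul_of_nonneg_left hrb
        (by positivity : (0:ℝ) ≤ A^2 * Mt)
      linarith [this]
    have h2 : A^2 * Mt * 11 = 22 * (Xt * A) := by linear_combination 11*A*hAMt
    calc |Ep^2 + Hp^2 + A^2*(Mt*r)|
        ≤ |Ep^2 + Hp^2| + |A^2*(Mt*r)| := abs_add_le _ _
      _ ≤ (Ep^2 + Hp^2) + A^2*Mt*11 := by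
          rw [abs_of_nonneg (by positivity)]; linarith
      _ ≤ 2*D^2*en^2 + 22*(Xt*A) := by rw [h2] at *; linarith [hEH]
  have hXA : (x^2/2) * en ≤ Xt * A := by
    have h1 : Xt * A = 2*Xt^2/Mt := by rw [hAd]; field_simp
    rw [h1, le_div_iff₀ hMt]
    have h2 := mul_le_mul_of_nonneg_left hM1 (show (0:ℝ) ≤ x^2/2*en by positivity)
    linarith [hXlow]
  have hfinal : |S - A^2| ≤ (4*D^2/x^2 + 22) * Xt * A := by
    have hq : (4*D^2/x^2) * x^2 = 4*D^2 := by field_simp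
    have hqnn : (0:ℝ) ≤ 4*D^2/x^2 := by positivity
    have h3 : 2*D^2*en^2 ≤ (4*D^2/x^2) * (Xt*A) := by
      have h4 := mul_le_mul_of_nonneg_left hXA hqnn
      have h5 : (4*D^2/x^2) * ((x^2/2) * en) = 2*D^2*en := by
        linear_combination en/2 * hq
      have h6 : 2*D^2*en^2 ≤ 2*D^2*en := by
        have := mul_nonneg (mul_nonneg (sq_nonneg D) henpos.le) (sub_nonneg.mpr hen1)
        linarith [this]
      linarith only [h4, h5, h6]
    calc |S - A^2| ≤ 2*D^2*en^2 + 22*(Xt*A) := habs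
      _ ≤ (4*D^2/x^2)*(Xt*A) + 22*(Xt*A) := by linarith
      _ = (4*D^2/x^2 + 22) * Xt * A := by ring
  have h5 : |S - A^2| / A ≤ (4*D^2/x^2 + 22) * Xt := by
    rw [div_le_iff₀ hA0]; exact hfinal
  exact le_trans (abs_sqrt_sub_le hA0 hS0) h5

/-- Late-time behaviour of the Weyl parameter: if `X` and `M` decay at the
same exponential rate `e^{−τ/2}` and `Σ₊ = O(e^{−τ})`, then
`𝒲 = (2X/M)(1 + O(M))` and `𝒲 → 2x/m`. -/
theorem weyl_parameter_limit
    (M X Sp ψ : ℝ → ℝ) (m x : ℝ) (hm : 0 < m) (hx : 0 < x)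
    (hMpos : ∀ τ, 0 < M τ) (hXpos : ∀ τ, 0 < X τ)
    (hM : Tendsto (fun τ => M τ * Real.exp (τ / 2)) atTop (nhds m))
    (hX : Tendsto (fun τ => X τ * Real.exp (τ / 2)) atTop (nhds x))
    (hSp : ∃ C, ∀ τ, |Sp τ| ≤ C * Real.exp (-τ)) :
    (∃ C T, ∀ τ, T ≤ τ →
      |Real.sqrt
          ((Sp τ * (1 + Sp τ) + (1/2) * (X τ) ^ 2
              * (1 - 3 * Real.cos (2 * ψ τ))) ^ 2
            + ((2 * X τ / M τ) * (Real.sin (ψ τ)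
                + (1/2) * M τ * (1 - 2 * Sp τ) * Real.cos (ψ τ))) ^ 2
            + (-(3/2) * (X τ) ^ 2 * Real.sin (2 * ψ τ)) ^ 2
            + ((2 * X τ / M τ) * (-Real.cos (ψ τ)
                - (3/2) * M τ * Sp τ * Real.sin (ψ τ))) ^ 2)
        - 2 * X τ / M τ| ≤ C * M τ * (X τ / M τ))
    ∧ Tendsto (fun τ => Real.sqrt
          ((Sp τ * (1 + Sp τ) + (1/2) * (X τ) ^ 2
              * (1 - 3 * Real.cos (2 * ψ τ))) ^ 2
            + ((2 * X τ / M τ) * (Real.sin (ψ τ)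
                + (1/2) * M τ * (1 - 2 * Sp τ) * Real.cos (ψ τ))) ^ 2
            + (-(3/2) * (X τ) ^ 2 * Real.sin (2 * ψ τ)) ^ 2
            + ((2 * X τ / M τ) * (-Real.cos (ψ τ)
                - (3/2) * M τ * Sp τ * Real.sin (ψ τ))) ^ 2))
        atTop (nhds (2 * x / m)) := by
  obtain ⟨C0, hC0⟩ := hSp
  have hC0nn : (0:ℝ) ≤ C0 := le_trans (abs_nonneg (Sp 0)) (by simpa using hC0 0)
  set C : ℝ := 4*(2*C0+5*x^2)^2/x^2 + 22 with hCdef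
  have hCnn : 0 ≤ C := by positivity
  -- basic limits
  have he : Tendsto (fun τ : ℝ => Real.exp (-τ)) atTop (nhds 0) :=
    Real.tendsto_exp_atBot.comp tendsto_neg_atTop_atBot
  have heh : Tendsto (fun τ : ℝ => Real.exp (-(τ/2))) atTop (nhds 0) :=
    Real.tendsto_exp_atBot.comp
      (tendsto_neg_atTop_atBot.comp (tendsto_id.atTop_div_const (by norm_num)))
  have hcancel : ∀ (f : ℝ → ℝ) (τ : ℝ),
      f τ * Real.exp (τ/2) * Real.exp (-(τ/2)) = f τ := by
    intro f τ
    rw [mul_assoc, ← Real.exp_add, add_neg_cancel, Real.exp_zero, mul_one]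
  have hM0 : Tendsto M atTop (nhds 0) := by
    have h := hM.mul heh
    rw [show (fun τ => M τ * Real.exp (τ/2) * Real.exp (-(τ/2))) = M from
      funext (hcancel M)] at h
    simpa using h
  have hX0 : Tendsto X atTop (nhds 0) := by
    have h := hX.mul heh
    rw [show (fun τ => X τ * Real.exp (τ/2) * Real.exp (-(τ/2))) = X from
      funext (hcancel X)] at h
    simpa using h
  have hSp0 : Tendsto Sp atTop (nhds 0) := by
    refine squeeze_zero_norm (fun τ => hC0 τ) ?_
    simpa using he.const_mul C0
  -- eventual facts
  have evX : ∀ᶠ τ in atTop, |X τ * Real.exp (τ/2) - x| < x/2 := by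
    have := Metric.tendsto_nhds.mp hX (x/2) (by positivity)
    simpa [Real.dist_eq] using this
  have evM1 : ∀ᶠ τ in atTop, M τ ≤ 1 :=
    (hM0.eventually_lt_const (by norm_num : (0:ℝ) < 1)).mono fun τ h => h.le
  have evSig : ∀ᶠ τ in atTop, |Sp τ| ≤ 1 := by
    have := Metric.tendsto_nhds.mp hSp0 1 one_pos
    simp only [Real.dist_eq, sub_zero] at this
    exact this.mono fun τ h => h.le
  have evt : ∀ᶠ τ in atTop, (0:ℝ) ≤ τ := eventually_ge_atTop 0
  -- main eventual estimate
  have key : ∀ᶠ τ in atTop,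
      |Real.sqrt
          ((Sp τ * (1 + Sp τ) + (1/2) * (X τ) ^ 2
              * (1 - 3 * Real.cos (2 * ψ τ))) ^ 2
            + ((2 * X τ / M τ) * (Real.sin (ψ τ)
                + (1/2) * M τ * (1 - 2 * Sp τ) * Real.cos (ψ τ))) ^ 2
            + (-(3/2) * (X τ) ^ 2 * Real.sin (2 * ψ τ)) ^ 2
            + ((2 * X τ / M τ) * (-Real.cos (ψ τ)
                - (3/2) * M τ * Sp τ * Real.sin (ψ τ))) ^ 2)
        - 2 * X τ / M τ| ≤ C * X τ := by
    filter_upwards [evX, evM1, evSig, evt] with τ hXτ hM1 hSig1 hτ0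
    obtain ⟨hxl', hxu'⟩ := abs_lt.mp hXτ
    have hEE : Real.exp (-τ) * (Real.exp (τ/2) * Real.exp (τ/2)) = 1 := by
      rw [← Real.exp_add, ← Real.exp_add,
        show -τ + (τ/2 + τ/2) = 0 by ring, Real.exp_zero]
    have hen1 : Real.exp (-τ) ≤ 1 := Real.exp_le_one_iff.mpr (by linarith)
    exact weyl_pointwise x C0 (M τ) (X τ) (Sp τ) (Real.sin (ψ τ))
      (Real.cos (ψ τ)) (Real.cos (2 * ψ τ)) (Real.sin (2 * ψ τ))
      (Real.exp (τ/2)) (Real.exp (-τ)) hx hC0nn (hMpos τ) (hXpos τ) hM1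
      hSig1 (hC0 τ) (Real.sin_sq_add_cos_sq _) (Real.abs_sin_le_one _)
      (Real.abs_cos_le_one _) (Real.abs_cos_le_one _) (Real.abs_sin_le_one _)
      (Real.exp_pos _) (Real.exp_pos _) hEE hen1 (by linarith) (by linarith)
  constructor
  · obtain ⟨T, hT⟩ := eventually_atTop.mp key
    refine ⟨C, T, fun τ hτ => ?_⟩
    have h := hT τ hτ
    have hMne : M τ ≠ 0 := (hMpos τ).ne'
    have heq : C * M τ * (X τ / M τ) = C * X τ := by
      field_simp
    rw [heq]; exact h
  · have hAten : Tendsto (fun τ => 2 * X τ / M τ) atTop (nhds (2*x/m)) := by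
      have h := (hX.div hM hm.ne').const_mul 2
      have heq : (fun τ => 2 * X τ / M τ)
          = fun τ => 2 * (X τ * Real.exp (τ/2) / (M τ * Real.exp (τ/2))) := by
        funext τ
        rw [mul_div_mul_right _ _ (Real.exp_ne_zero _), mul_div_assoc]
      rw [heq, mul_div_assoc]
      exact h
    have hg : Tendsto (fun τ => C * X τ) atTop (nhds 0) := by
      simpa using hX0.const_mul C
    have hdiff := squeeze_zero_norm'
      (key.mono fun τ h => by rwa [Real.norm_eq_abs]) hg
    have hsum := hdiff.add hAten
    simpa using hsum
end
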